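/- For every ε ∈ (0, 1) and every job-scheduling instance c with m machines and n jobs, there exist an allocation A and payments p : Fin m → ℝ such that the mechanism (A, p) is (1−ε)-cyclic-envy-free, i.e., (1−ε)·c_i(A_i) − p_i ≤ c_i(A_{i−1}) − p_{i−1} for every machine i (machine indices taken modulo m), and A gives a (1/ε)-approximation to the optimal makespan, i.e., max_{i ∈ Fin m} c_i(A_i) ≤ (1/ε)·OPT(c). -/

import Mathlib

open Finset
open Fin.NatCast

noncomputable section

/-- The cost to machine `i` of the bundle of jobs assigned to machine `k` under allocation `A`. -/
def bundleCost {m n : ℕ} (c : Fin m → Fin n → ℝ) (A : Fin n → Fin m) (i k : Fin m) : ℝ :=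
  ∑ j ∈ Finset.univ.filter (fun j => A j = k), c i j

/-- The total cost to machine `i` of all jobs, `c_i([n])`. -/
def rowSum {m n : ℕ} (c : Fin m → Fin n → ℝ) (i : Fin m) : ℝ :=
  ∑ j, c i j

/-- The makespan of allocation `A`: the maximum cost of any machine. -/
def makespan {m n : ℕ} (hm : 0 < m) (c : Fin m → Fin n → ℝ) (A : Fin n → Fin m) : ℝ :=
  (Finset.univ : Finset (Fin m)).sup' ⟨⟨0, hm⟩, Finset.mem_univ _⟩ fun i => bundleCost c A i i

/-- The optimal (minimum) makespan over all allocations. -/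
def OPT {m n : ℕ} (hm : 0 < m) (c : Fin m → Fin n → ℝ) : ℝ :=
  (Finset.univ : Finset (Fin n → Fin m)).inf' ⟨fun _ => ⟨0, hm⟩, Finset.mem_univ _⟩
    fun X => makespan hm c X

/-- For every `ε ∈ (0,1)` there is a `(1-ε)`-cyclic-envy-free mechanism giving a
`1/ε`-approximation to the optimal makespan. -/
theorem stmt_16 (ε : ℝ) (hε0 : 0 < ε) (hε1 : ε < 1) {m n : ℕ} (hm : 2 ≤ m) (hn : 2 ≤ n)
    (c : Fin m → Fin n → ℝ) (hc : ∀ i j, 0 ≤ c i j) :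
    ∃ (A : Fin n → Fin m) (p : Fin m → ℝ),
      (∀ i : Fin m,
        (1 - ε) * bundleCost c A i i - p i ≤
          bundleCost c A i (i - ⟨1, by omega⟩) - p (i - ⟨1, by omega⟩)) ∧
      makespan (by omega) c A ≤ (1 / ε) * OPT (by omega) c := by
  classical
  have hm0 : 0 < m := by omega
  haveI : NeZero m := ⟨by omega⟩
  have h1e0 : (0:ℝ) ≤ 1 - ε := by linarith
  have h1e1 : (1:ℝ) - ε ≤ 1 := by linarith
  -- optimal allocation
  obtain ⟨As, -, hAs⟩ := Finset.exists_mem_eq_inf'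
    (⟨fun _ => ⟨0, hm0⟩, Finset.mem_univ _⟩ : (Finset.univ : Finset (Fin n → Fin m)).Nonempty)
    (fun X => makespan hm0 c X)
  have hOPT : OPT hm0 c = makespan hm0 c As := hAs
  have hBC0 : ∀ (B : Fin n → Fin m) (i k : Fin m), 0 ≤ bundleCost c B i k := by
    intro B i k
    exact Finset.sum_nonneg fun j _ => hc i j
  have hAsOPT : ∀ k : Fin m, bundleCost c As k k ≤ OPT hm0 c := by
    intro k
    rw [hOPT]
    exact Finset.le_sup' (fun i => bundleCost c As i i) (Finset.mem_univ k)
  have hOPT0 : 0 ≤ OPT hm0 c :=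
    le_trans (hBC0 As ⟨0, hm0⟩ ⟨0, hm0⟩) (hAsOPT ⟨0, hm0⟩)
  -- the walk: for each job exists t < m with the stopping condition
  have key : ∀ j : Fin n, ∃ t : ℕ, t < m ∧
      (1 - ε) * c (As j + (t : Fin m)) j ≤ c (As j + (t : Fin m) + 1) j := by
    intro j
    by_contra hcon
    push_neg at hcon
    -- chain of strict decays
    have chain : ∀ N : ℕ, N ≤ m → c (As j + (N : Fin m)) j ≤ (1-ε)^N * c (As j) j := by
      intro N
      induction N with
      | zero => intro _; simp
      | succ N ih =>
        intro hN
        have hfail := hcon N (by omega)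
        have h2 := ih (by omega)
        have hstep : c (As j + (N : Fin m) + 1) j < (1-ε) * ((1-ε)^N * c (As j) j) :=
          lt_of_lt_of_le hfail (mul_le_mul_of_nonneg_left h2 h1e0)
        have hcast : (((N+1 : ℕ)) : Fin m) = (N : Fin m) + 1 := by push_cast; ring
        rw [hcast, ← add_assoc]
        calc c (As j + (N : Fin m) + 1) j ≤ (1-ε) * ((1-ε)^N * c (As j) j) := le_of_lt hstep
          _ = (1-ε)^(N+1) * c (As j) j := by ring
    have hx : 0 ≤ c (As j) j := hc _ _
    have hlast := hcon (m-1) (by omega)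
    have hchain := chain (m-1) (by omega)
    have hmc : (((m-1:ℕ)) : Fin m) + 1 = 0 := by
      have : (((m-1:ℕ)) : Fin m) + 1 = (((m-1+1 : ℕ)) : Fin m) := by push_cast; ring
      rw [this, show m-1+1 = m by omega, Fin.natCast_self]
    have heq : c (As j + ((m-1:ℕ) : Fin m) + 1) j = c (As j) j := by
      rw [add_assoc, hmc, add_zero]
    rw [heq] at hlast
    have hpow0 : (0:ℝ) ≤ (1-ε)^(m-1) := pow_nonneg h1e0 _
    have hpow1 : (1-ε)^(m-1) ≤ 1 := pow_le_one₀ h1e0 h1e1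
    have hb1 := mul_le_mul_of_nonneg_left hchain h1e0
    have hb2 := mul_le_mul_of_nonneg_right h1e1 (mul_nonneg hpow0 hx)
    have hb3 := mul_le_mul_of_nonneg_right hpow1 hx
    nlinarith [hb1, hb2, hb3]
  -- minimal such t
  have keymin : ∀ j : Fin n, ∃ t : ℕ, (t < m ∧
      (1 - ε) * c (As j + (t : Fin m)) j ≤ c (As j + (t : Fin m) + 1) j) ∧
      ∀ t' < t, ¬ ((1 - ε) * c (As j + (t' : Fin m)) j ≤ c (As j + (t' : Fin m) + 1) j) := by
    intro j
    obtain ⟨t, ht⟩ := key j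
    refine ⟨Nat.find (key j), Nat.find_spec (key j), fun t' ht' hq => ?_⟩
    have htm : t' < m := lt_of_lt_of_le (lt_of_lt_of_le ht' (Nat.find_le ht)) (le_of_lt ht.1)
    exact Nat.find_min (key j) ht' ⟨htm, hq⟩
  choose T hT hTmin using keymin
  set A : Fin n → Fin m := fun j => As j + (T j : Fin m) with hA
  -- per job stopping condition
  have hjob : ∀ j : Fin n, (1 - ε) * c (A j) j ≤ c (A j + 1) j := fun j => (hT j).2
  have hTm : ∀ j, T j < m := fun j => (hT j).1
  -- decay of cost
  have decay : ∀ j : Fin n, c (A j) j ≤ (1-ε)^(T j) * c (As j) j := by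
    intro j
    have gen : ∀ N : ℕ, N ≤ T j → c (As j + (N : Fin m)) j ≤ (1-ε)^N * c (As j) j := by
      intro N
      induction N with
      | zero => intro _; simp
      | succ N ih =>
        intro hN
        have hfail : ¬ ((1 - ε) * c (As j + (N : Fin m)) j ≤ c (As j + (N : Fin m) + 1) j) :=
          hTmin j N (by omega)
        push_neg at hfail
        have h2 := ih (by omega)
        have hcast : (((N+1 : ℕ)) : Fin m) = (N : Fin m) + 1 := by push_cast; ring
        rw [hcast, ← add_assoc]
        calc c (As j + (N : Fin m) + 1) j
            ≤ (1-ε) * c (As j + (N : Fin m)) j := le_of_lt hfail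
          _ ≤ (1-ε) * ((1-ε)^N * c (As j) j) := mul_le_mul_of_nonneg_left h2 h1e0
          _ = (1-ε)^(N+1) * c (As j) j := by ring
    exact gen (T j) le_rfl
  -- the two sum identities
  have hself : ∑ i : Fin m, bundleCost c A i i = ∑ j, c (A j) j := by
    unfold bundleCost
    rw [← Finset.sum_fiberwise Finset.univ A (fun j => c (A j) j)]
    refine Finset.sum_congr rfl fun i _ => Finset.sum_congr rfl fun j hj => ?_
    rw [(Finset.mem_filter.mp hj).2]
  have hcross : ∑ i : Fin m, bundleCost c A i (i - 1) = ∑ j, c (A j + 1) j := by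
    unfold bundleCost
    rw [← Finset.sum_fiberwise Finset.univ (fun j => A j + 1) (fun j => c (A j + 1) j)]
    refine Finset.sum_congr rfl fun i _ => ?_
    rw [show (Finset.univ.filter fun j => A j = i - 1) =
        (Finset.univ.filter fun j => A j + 1 = i) from
      Finset.filter_congr fun j _ => by rw [eq_sub_iff_add_eq]]
    refine Finset.sum_congr rfl fun j hj => ?_
    rw [(Finset.mem_filter.mp hj).2]
  set dd : Fin m → ℝ := fun i => bundleCost c A i (i - 1) - (1-ε) * bundleCost c A i i with hdd
  have hsum : 0 ≤ ∑ i : Fin m, dd i := by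
    rw [hdd]
    simp only
    rw [Finset.sum_sub_distrib, ← Finset.mul_sum, hself, hcross, Finset.mul_sum,
      ← Finset.sum_sub_distrib]
    exact Finset.sum_nonneg fun j _ => by linarith [hjob j]
  set p : Fin m → ℝ := fun i => ∑ t ∈ Finset.univ.filter (fun t : Fin m => i.val < t.val), dd t
    with hp
  have hval1 : ((1 : Fin m) : ℕ) = 1 := by
    rw [Fin.val_one']
    exact Nat.mod_eq_of_lt (by omega)
  have hone : (⟨1, by omega⟩ : Fin m) = (1 : Fin m) := by
    apply Fin.ext
    rw [hval1]
  refine ⟨A, p, ?_, ?_⟩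
  · intro i
    simp only [hone]
    have hgoal : p (i - 1) ≤ p i + dd i → (1 - ε) * bundleCost c A i i - p i ≤
        bundleCost c A i (i - 1) - p (i - 1) := by
      intro h
      have : dd i = bundleCost c A i (i - 1) - (1-ε) * bundleCost c A i i := rfl
      linarith [h, this]
    apply hgoal
    by_cases hi : i.val = 0
    · have hi0 : i = 0 := by ext; simpa using hi
      have hsubval : ((i - 1 : Fin m) : ℕ) = m - 1 := by
        rw [hi0, Fin.sub_def]
        simp only [Fin.val_zero, hval1]
        rw [Nat.add_zero]
        exact Nat.mod_eq_of_lt (by omega)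
      have hempty : (Finset.univ.filter fun t : Fin m => (i - 1 : Fin m).val < t.val) = ∅ := by
        refine Finset.filter_eq_empty_iff.mpr fun t _ => ?_
        rw [hsubval]
        omega
      have hp1 : p (i - 1) = 0 := by rw [hp]; simp only; rw [hempty, Finset.sum_empty]
      have hfull : (Finset.univ : Finset (Fin m)) =
          insert i (Finset.univ.filter fun t : Fin m => i.val < t.val) := by
        ext t
        simp only [Finset.mem_univ, Finset.mem_insert, Finset.mem_filter, true_and, true_iff]
        by_cases ht : t = i
        · left; exact ht
        · right
          have : t.val ≠ i.val := fun h => ht (Fin.ext h)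
          omega
      have : ∑ t : Fin m, dd t = dd i + p i := by
        rw [hfull, Finset.sum_insert (by simp)]
      rw [hp1]
      linarith [hsum, this]
    · have hsubval : ((i - 1 : Fin m) : ℕ) = i.val - 1 := by
        have hilt := i.isLt
        rw [Fin.sub_def]
        simp only [hval1]
        have h1 : m - 1 + i.val = (i.val - 1) + 1 * m := by omega
        rw [h1, Nat.add_mul_mod_self_right]
        exact Nat.mod_eq_of_lt (by omega)
      have hins : (Finset.univ.filter fun t : Fin m => (i - 1 : Fin m).val < t.val) =
          insert i (Finset.univ.filter fun t : Fin m => i.val < t.val) := by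
        ext t
        simp only [Finset.mem_filter, Finset.mem_univ, true_and, Finset.mem_insert, hsubval]
        constructor
        · intro h
          by_cases ht : t = i
          · left; exact ht
          · right
            have : t.val ≠ i.val := fun hh => ht (Fin.ext hh)
            omega
        · intro h
          rcases h with h | h
          · rw [h]; omega
          · omega
      have : p (i - 1) = dd i + p i := by
        rw [hp]; simp only; rw [hins, Finset.sum_insert (by simp)]
      linarith [this]
  · show makespan hm0 c A ≤ (1 / ε) * OPT hm0 c
    apply Finset.sup'_le
    intro i _
    -- load bound
    have hload : bundleCost c A i i ≤ ∑ d ∈ Finset.range m, (1-ε)^d * OPT hm0 c := by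
      unfold bundleCost
      rw [← Finset.sum_fiberwise_of_maps_to
        (g := fun j : Fin n => T j) (t := Finset.range m)
        (fun j hj => Finset.mem_range.mpr (hTm j)) (fun j => c i j)]
      apply Finset.sum_le_sum
      intro d hd
      -- inner bound
      have hsubset : ((Finset.univ.filter fun j => A j = i).filter fun j => T j = d) ⊆
          Finset.univ.filter fun j => As j = i - (d : Fin m) := by
        intro j hj
        simp only [Finset.mem_filter, Finset.mem_univ, true_and] at hj ⊢
        obtain ⟨hj1, hj2⟩ := hj
        have : As j + (d : Fin m) = i := by rw [← hj2]; exact hj1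
        exact eq_sub_of_add_eq this
      calc ∑ j ∈ (Finset.univ.filter fun j => A j = i).filter fun j => T j = d, c i j
          ≤ ∑ j ∈ (Finset.univ.filter fun j => A j = i).filter fun j => T j = d,
            (1-ε)^d * c (As j) j := by
            apply Finset.sum_le_sum
            intro j hj
            simp only [Finset.mem_filter, Finset.mem_univ, true_and] at hj
            obtain ⟨hj1, hj2⟩ := hj
            calc c i j = c (A j) j := by rw [hj1]
              _ ≤ (1-ε)^(T j) * c (As j) j := decay j
              _ = (1-ε)^d * c (As j) j := by rw [hj2]
        _ = (1-ε)^d * ∑ j ∈ (Finset.univ.filter fun j => A j = i).filter fun j => T j = d,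
            c (As j) j := by rw [Finset.mul_sum]
        _ ≤ (1-ε)^d * ∑ j ∈ Finset.univ.filter fun j => As j = i - (d : Fin m),
            c (As j) j := by
            apply mul_le_mul_of_nonneg_left _ (pow_nonneg h1e0 d)
            exact Finset.sum_le_sum_of_subset_of_nonneg hsubset fun j _ _ => hc _ _
        _ = (1-ε)^d * bundleCost c As (i - (d : Fin m)) (i - (d : Fin m)) := by
            unfold bundleCost
            congr 1
            refine Finset.sum_congr rfl fun j hj => ?_
            rw [(Finset.mem_filter.mp hj).2]
        _ ≤ (1-ε)^d * OPT hm0 c :=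
            mul_le_mul_of_nonneg_left (hAsOPT _) (pow_nonneg h1e0 d)
    have hgeom : ∑ d ∈ Finset.range m, (1-ε)^d ≤ 1/ε := by
      rw [geom_sum_eq (by intro h; linarith [h] : (1:ℝ) - ε ≠ 1)]
      have hrw : ((1-ε)^m - 1) / ((1-ε) - 1) = (1 - (1-ε)^m) / ε := by
        rw [show (1-ε) - 1 = -ε by ring]
        rw [div_neg, ← neg_div, neg_sub]
      rw [hrw]
      have : (1:ℝ) - (1-ε)^m ≤ 1 := by
        have := pow_nonneg h1e0 m
        linarith
      exact (div_le_div_iff_of_pos_right hε0).mpr this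
    calc bundleCost c A i i ≤ ∑ d ∈ Finset.range m, (1-ε)^d * OPT hm0 c := hload
      _ = (∑ d ∈ Finset.range m, (1-ε)^d) * OPT hm0 c := by rw [Finset.sum_mul]
      _ ≤ (1/ε) * OPT hm0 c := mul_le_mul_of_nonneg_right hgeom hOPT0
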